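/- arXiv:1712.09471 — 4 statements merged into one kernel-verified Lean document; each statement's English description precedes it below -/
import Mathlib

section
/- For every 2-coloring of the edges of the complete graph on N = 2m vertices (m ≥ 1), the number of monochromatic triangles is at least m(m-1)(m-2)/3. -/
/-- The set of monochromatic triangles of a 2-coloring `col` of the edges of
the complete graph on `Fin N`: 3-element vertex sets whose pairwise edges all
get the same color. -/
def monoTriangles {N : ℕ} (col : Fin N → Fin N → Bool) : Finset (Finset (Fin N)) :=
  (Finset.univ.powersetCard 3).filter
    (fun s => (∀ i ∈ s, ∀ j ∈ s, i ≠ j → col i j = true) ∨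
              (∀ i ∈ s, ∀ j ∈ s, i ≠ j → col i j = false))

open Finset

lemma c2 (n : ℕ) : 2 * (n+2).choose 2 = (n+2)*(n+1) := by
  induction n with
  | zero => decide
  | succ k ih =>
    have h : (k+3).choose 2 = (k+2).choose 1 + (k+2).choose 2 := Nat.choose_succ_succ' (k+2) 1
    rw [h, Nat.choose_one_right]
    ring_nf at *
    omega

lemma c3 (n : ℕ) : 6 * (n+3).choose 3 = (n+3)*(n+2)*(n+1) := by
  induction n with
  | zero => decide
  | succ k ih =>
    have h : (k+4).choose 3 = (k+3).choose 2 + (k+3).choose 3 := Nat.choose_succ_succ' (k+3) 2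
    have h2 := c2 (k+1)
    rw [h]
    ring_nf at *
    nlinarith [ih, h2]

abbrev Qpred {N : ℕ} (col : Fin N → Fin N → Bool) (s : Finset (Fin N)) (v : Fin N) : Prop :=
  ∃ i ∈ s, ∃ j ∈ s, i ≠ v ∧ j ≠ v ∧ col v i ≠ col v j

lemma q_iff {N : ℕ} (col : Fin N → Fin N → Bool) (u v w : Fin N) (hv : v ≠ u) (hw : w ≠ u) :
    Qpred col {u,v,w} u ↔ col u v ≠ col u w := by
  constructor
  · rintro ⟨i, hi, j, hj, hiu, hju, hij⟩
    simp only [mem_insert, mem_singleton] at hi hj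
    rcases hi with rfl|rfl|rfl <;> rcases hj with rfl|rfl|rfl <;>
      first | exact hij | exact fun h => hij h.symm | simp_all
  · intro h
    exact ⟨v, by simp, w, by simp, hv, hw, h⟩

lemma all_iff {N : ℕ} (col : Fin N → Fin N → Bool) (hsym : ∀ i j, col i j = col j i)
    (a b c : Fin N) (hab : a ≠ b) (hac : a ≠ c) (hbc : b ≠ c) (t : Bool) :
    (∀ i ∈ ({a,b,c} : Finset (Fin N)), ∀ j ∈ ({a,b,c} : Finset (Fin N)), i ≠ j → col i j = t) ↔
      (col a b = t ∧ col a c = t ∧ col b c = t) := by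
  constructor
  · intro h
    exact ⟨h a (by simp) b (by simp) hab, h a (by simp) c (by simp) hac,
           h b (by simp) c (by simp) hbc⟩
  · rintro ⟨h1, h2, h3⟩ i hi j hj hij
    simp only [mem_insert, mem_singleton] at hi hj
    rcases hi with rfl|rfl|rfl <;> rcases hj with rfl|rfl|rfl <;>
      first | exact absurd rfl hij | assumption | (rw [hsym]; assumption)

lemma tri_count {N : ℕ} (col : Fin N → Fin N → Bool) (hsym : ∀ i j, col i j = col j i)
    (s : Finset (Fin N)) (hs : s.card = 3) :
    (s.filter (Qpred col s)).card =
      if (∀ i ∈ s, ∀ j ∈ s, i ≠ j → col i j = true) ∨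
         (∀ i ∈ s, ∀ j ∈ s, i ≠ j → col i j = false) then 0 else 2 := by
  classical
  obtain ⟨a, b, c, hab, hac, hbc, rfl⟩ := Finset.card_eq_three.mp hs
  have e1 : ({a,b,c} : Finset (Fin N)) = {b,a,c} := by apply Finset.insert_comm
  have e2 : ({a,b,c} : Finset (Fin N)) = {c,a,b} := by
    rw [Finset.pair_comm b c]; apply Finset.insert_comm
  have Qa := q_iff col a b c (Ne.symm hab) (Ne.symm hac)
  have Qb := q_iff col b a c hab (Ne.symm hbc)
  have Qc := q_iff col c a b hac hbc
  rw [← e1] at Qb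
  rw [← e2] at Qc
  have M1 := all_iff col hsym a b c hab hac hbc true
  have M2 := all_iff col hsym a b c hab hac hbc false
  rw [Finset.card_filter, Finset.sum_insert (by simp [hab, hac]), Finset.sum_pair hbc]
  simp only [Qa, Qb, Qc, M1, M2, hsym b a, hsym c a, hsym c b]
  cases hx : col a b <;> cases hy : col a c <;> cases hz : col b c <;> simp

lemma vertex_count {N : ℕ} (col : Fin N → Fin N → Bool) (v : Fin N) :
    ((Finset.univ.powersetCard 3).filter (fun s => v ∈ s ∧ Qpred col s v)).card =
      ((Finset.univ.erase v).filter (fun u => col v u = true)).card *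
      ((Finset.univ.erase v).filter (fun u => col v u = false)).card := by
  classical
  set A := (Finset.univ.erase v).filter (fun u => col v u = true) with hA
  set B := (Finset.univ.erase v).filter (fun u => col v u = false) with hB
  rw [← Finset.card_product]
  symm
  apply Finset.card_bij (fun p _ => insert v {p.1, p.2})
  · rintro ⟨i, j⟩ hp
    rw [Finset.mem_product] at hp
    obtain ⟨hiA, hjB⟩ := hp
    rw [hA, Finset.mem_filter, Finset.mem_erase] at hiA
    rw [hB, Finset.mem_filter, Finset.mem_erase] at hjB
    obtain ⟨⟨hiv, -⟩, hci⟩ := hiA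
    obtain ⟨⟨hjv, -⟩, hcj⟩ := hjB
    have hij : i ≠ j := fun h => by simp [h, hcj] at hci
    refine Finset.mem_filter.mpr ⟨?_, ?_, ?_⟩
    · rw [Finset.mem_powersetCard]
      refine ⟨Finset.subset_univ _, ?_⟩
      rw [Finset.card_insert_of_notMem (by simp [Ne.symm hiv, Ne.symm hjv]),
        Finset.card_pair hij]
    · exact Finset.mem_insert_self _ _
    · exact ⟨i, by simp, j, by simp, hiv, hjv, by simp [hci, hcj]⟩
  · rintro ⟨i1, j1⟩ hp1 ⟨i2, j2⟩ hp2 h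
    rw [Finset.mem_product] at hp1 hp2
    obtain ⟨hiA1, hjB1⟩ := hp1
    obtain ⟨hiA2, hjB2⟩ := hp2
    rw [hA, Finset.mem_filter, Finset.mem_erase] at hiA1 hiA2
    rw [hB, Finset.mem_filter, Finset.mem_erase] at hjB1 hjB2
    have hmem : i1 ∈ insert v ({i2, j2} : Finset (Fin N)) := by
      rw [← h]; simp
    have hmem' : j1 ∈ insert v ({i2, j2} : Finset (Fin N)) := by
      rw [← h]; simp
    simp only [Finset.mem_insert, Finset.mem_singleton] at hmem hmem'
    have e1 : i1 = i2 := by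
      rcases hmem with h'|h'|h'
      · exact absurd h' hiA1.1.1
      · exact h'
      · subst h'; rw [hjB2.2] at hiA1; exact absurd hiA1.2 (by simp)
    have e2 : j1 = j2 := by
      rcases hmem' with h'|h'|h'
      · exact absurd h' hjB1.1.1
      · subst h'; rw [hiA2.2] at hjB1; exact absurd hjB1.2 (by simp)
      · exact h'
    simp [e1, e2]
  · intro s hs
    rw [Finset.mem_filter] at hs
    obtain ⟨hsT, hvs, i, his, j, hjs, hiv, hjv, hij⟩ := hs
    have hcard : s.card = 3 := (Finset.mem_powersetCard.mp hsT).2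
    have hijne : i ≠ j := fun h => hij (by rw [h])
    have hsub : insert v ({i, j} : Finset (Fin N)) ⊆ s := by
      intro x hx
      simp only [Finset.mem_insert, Finset.mem_singleton] at hx
      rcases hx with rfl|rfl|rfl <;> assumption
    have hseq : insert v ({i, j} : Finset (Fin N)) = s := by
      apply Finset.eq_of_subset_of_card_le hsub
      rw [Finset.card_insert_of_notMem (by simp [Ne.symm hiv, Ne.symm hjv]),
        Finset.card_pair hijne, hcard]
    cases hci : col v i
    · have hcj : col v j = true := by
        cases hcj : col v j
        · rw [hci, hcj] at hij; exact absurd rfl hij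
        · rfl
      refine ⟨(j, i), ?_, ?_⟩
      · rw [Finset.mem_product, hA, hB]
        constructor
        · rw [Finset.mem_filter, Finset.mem_erase]
          exact ⟨⟨hjv, Finset.mem_univ _⟩, hcj⟩
        · rw [Finset.mem_filter, Finset.mem_erase]
          exact ⟨⟨hiv, Finset.mem_univ _⟩, hci⟩
      · rw [← hseq]; apply congrArg; exact Finset.pair_comm j i
    · refine ⟨(i, j), ?_, ?_⟩
      · have hcj : col v j = false := by
          cases hcj : col v j
          · rfl
          · rw [hci, hcj] at hij; exact absurd rfl hij
        rw [Finset.mem_product, hA, hB]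
        constructor
        · rw [Finset.mem_filter, Finset.mem_erase]
          exact ⟨⟨hiv, Finset.mem_univ _⟩, hci⟩
        · rw [Finset.mem_filter, Finset.mem_erase]
          exact ⟨⟨hjv, Finset.mem_univ _⟩, hcj⟩
      · exact hseq

lemma prod_bound (a b m : ℕ) (hm : 1 ≤ m) (h : a + b = 2 * m - 1) : a * b ≤ m * (m - 1) := by
  obtain ⟨k, rfl⟩ := Nat.exists_eq_add_of_le hm
  have h' : a + b = 2 * k + 1 := by omega
  have e : 1 + k - 1 = k := by omega
  rw [e]
  have hz : (a : ℤ) * b ≤ (1 + k) * k := by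
    have hz' : (a : ℤ) + b = 2 * k + 1 := by exact_mod_cast h'
    rcases le_or_gt a k with hk | hk
    · have h1 : (a : ℤ) ≤ k := by exact_mod_cast hk
      have h2 : (k : ℤ) + 1 ≤ b := by
        have : k + 1 ≤ b := by omega
        exact_mod_cast this
      nlinarith [mul_nonneg (sub_nonneg.mpr h1) (sub_nonneg.mpr h2)]
    · have h1 : (k : ℤ) + 1 ≤ a := by exact_mod_cast hk
      have h2 : (b : ℤ) ≤ k := by
        have : b ≤ k := by omega
        exact_mod_cast this
      nlinarith [mul_nonneg (sub_nonneg.mpr h2) (sub_nonneg.mpr h1)]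
  exact_mod_cast hz

/-- Goodman, even case: for every 2-coloring of the edges of
`K_N` with `N = 2m`, `m ≥ 1`, there are at least `m(m-1)(m-2)/3`
monochromatic triangles. -/
theorem goodman_even (m : ℕ) (hm : 1 ≤ m)
    (col : Fin (2 * m) → Fin (2 * m) → Bool)
    (hsym : ∀ i j, col i j = col j i) :
    m * (m - 1) * (m - 2) / 3 ≤ (monoTriangles col).card := by
  classical
  have hMsub : monoTriangles col ⊆ Finset.univ.powersetCard 3 := Finset.filter_subset _ _
  have hMle := Finset.card_le_card hMsub
  have hcard3 : ∀ s ∈ (Finset.univ.powersetCard 3 : Finset (Finset (Fin (2*m)))),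
      s.card = 3 := fun s hs => (Finset.mem_powersetCard.mp hs).2
  -- step 1: per-triangle count
  have step1 : ∑ s ∈ Finset.univ.powersetCard 3, (s.filter (Qpred col s)).card =
      2 * ((Finset.univ.powersetCard 3 : Finset (Finset (Fin (2*m)))).card
            - (monoTriangles col).card) := by
    have h1 : ∀ s ∈ (Finset.univ.powersetCard 3 : Finset (Finset (Fin (2*m)))),
        (s.filter (Qpred col s)).card = if s ∈ monoTriangles col then 0 else 2 := by
      intro s hs
      rw [tri_count col hsym s (hcard3 s hs)]
      congr 1
      simp [monoTriangles, Finset.mem_filter, hs]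
    have h2 : (Finset.univ.powersetCard 3).filter (fun s => s ∈ monoTriangles col)
        = monoTriangles col := by
      ext s
      simp only [Finset.mem_filter]
      exact ⟨fun h => h.2, fun h => ⟨hMsub h, h⟩⟩
    rw [Finset.sum_congr rfl h1, Finset.sum_ite, Finset.sum_const, Finset.sum_const,
      smul_eq_mul, mul_zero, zero_add, smul_eq_mul, Finset.filter_not, h2,
      Finset.card_sdiff_of_subset hMsub, mul_comm]
  -- step 2: swap the double count
  have step2 : ∑ s ∈ Finset.univ.powersetCard 3, (s.filter (Qpred col s)).card =
      ∑ v : Fin (2*m),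
        ((Finset.univ.powersetCard 3).filter (fun s => v ∈ s ∧ Qpred col s v)).card := by
    calc ∑ s ∈ Finset.univ.powersetCard 3, (s.filter (Qpred col s)).card
        = ∑ s ∈ Finset.univ.powersetCard 3, ∑ v : Fin (2*m),
            (if v ∈ s ∧ Qpred col s v then 1 else 0) := by
          refine Finset.sum_congr rfl fun s _ => ?_
          have : s.filter (Qpred col s)
              = Finset.univ.filter (fun v => v ∈ s ∧ Qpred col s v) := by
            ext v; simp
          rw [this, Finset.card_filter]
      _ = ∑ v : Fin (2*m), ∑ s ∈ Finset.univ.powersetCard 3,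
            (if v ∈ s ∧ Qpred col s v then 1 else 0) := Finset.sum_comm
      _ = _ := by
          refine Finset.sum_congr rfl fun v _ => ?_
          rw [Finset.card_filter]
  -- step 3: per-vertex bound
  have step3 : ∀ v : Fin (2*m),
      ((Finset.univ.powersetCard 3).filter (fun s => v ∈ s ∧ Qpred col s v)).card
        ≤ m * (m - 1) := by
    intro v
    rw [vertex_count col v]
    apply prod_bound _ _ m hm
    have hsplit := Finset.card_filter_add_card_filter_not
      (s := Finset.univ.erase v) (p := fun u => col v u = true)
    have hB : (Finset.univ.erase v).filter (fun u => ¬ (col v u = true))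
        = (Finset.univ.erase v).filter (fun u => col v u = false) := by
      ext u; simp [Bool.not_eq_true]
    rw [hB] at hsplit
    rw [hsplit, Finset.card_erase_of_mem (Finset.mem_univ v), Finset.card_univ,
      Fintype.card_fin]
  -- combine
  have hsum : ∑ v : Fin (2*m),
      ((Finset.univ.powersetCard 3).filter (fun s => v ∈ s ∧ Qpred col s v)).card
        ≤ 2 * m * (m * (m-1)) := by
    calc _ ≤ (Finset.univ : Finset (Fin (2*m))).card • (m * (m-1)) :=
          Finset.sum_le_card_nsmul _ _ _ (fun v _ => step3 v)
      _ = 2 * m * (m * (m-1)) := by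
          rw [Finset.card_univ, Fintype.card_fin, smul_eq_mul]
  have hTcard : (Finset.univ.powersetCard 3 : Finset (Finset (Fin (2*m)))).card
      = (2*m).choose 3 := by
    rw [Finset.card_powersetCard, Finset.card_univ, Fintype.card_fin]
  have main : 2 * ((2*m).choose 3 - (monoTriangles col).card) ≤ 2 * m * (m * (m-1)) := by
    rw [← hTcard, ← step1, step2]; exact hsum
  rw [hTcard] at hMle
  -- final arithmetic
  rcases Nat.lt_or_ge m 3 with h3 | h3
  · interval_cases m <;> simp
  · obtain ⟨k, rfl⟩ : ∃ k, m = k + 3 := ⟨m - 3, by omega⟩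
    have hc := c3 (2*k+3)
    have e2m : 2*k+3+3 = 2*(k+3) := by ring
    rw [e2m] at hc
    have e1 : (k+3) - 1 = k+2 := by omega
    have e2 : (k+3) - 2 = k+1 := by omega
    rw [e1] at main
    rw [e1, e2]
    set C := (2*(k+3)).choose 3 with hC
    set Mc := (monoTriangles col).card with hMc
    have hmain' : 2 * C ≤ 2 * Mc + 2 * (k+3) * ((k+3) * (k+2)) := by omega
    have hgoal : (k+3) * (k+2) * (k+1) ≤ 3 * Mc := by nlinarith [hc, hmain']
    calc (k+3) * (k+2) * (k+1) / 3 ≤ 3 * Mc / 3 := Nat.div_le_div_right hgoal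
      _ = Mc := by omega
end

section
/- For every 2-coloring of the edges of the complete graph on N = 4m+1 vertices, the number of monochromatic triangles is at least 2m(m-1)(4m+1)/3. -/
/-!
Call a vertex `v` of a triangle a bichromatic corner if the two triangle edges at `v` have
different colours. A monochromatic triangle has no such corner and any other triangle has
exactly two, so twice the number of non-monochromatic triangles is the number of pairs of
differently coloured edges sharing an endpoint, `∑ᵥ rᵥ bᵥ`, where `rᵥ + bᵥ = N - 1` are the
two colour degrees of `v`. For `N = 2k + 1` each term is at most `k²`, hence at most
`N k² / 2` triangles are not monochromatic; for `N = 4m + 1` subtracting this from `N choose 3`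
leaves exactly `2m(m-1)(4m+1)/3`.
-/

open Finset

namespace Goodman

variable {V : Type*} [DecidableEq V] (col : V → V → Bool)

def IsMonochromatic (s : Finset V) : Prop :=
  (∀ i ∈ s, ∀ j ∈ s, i ≠ j → col i j = true) ∨ (∀ i ∈ s, ∀ j ∈ s, i ≠ j → col i j = false)

instance : DecidablePred (IsMonochromatic col) := fun _ => by
  unfold IsMonochromatic; infer_instance

def IsBichromaticCorner (s : Finset V) (v : V) : Prop :=
  v ∈ s ∧ ∃ i ∈ s.erase v, ∃ j ∈ s.erase v, col v i ≠ col v j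

instance (s : Finset V) : DecidablePred (IsBichromaticCorner col s) := fun _ => by
  unfold IsBichromaticCorner; infer_instance

def colorNeighbors [Fintype V] (v : V) (c : Bool) : Finset V :=
  (univ.erase v).filter (col v · = c)

lemma isMonochromatic_triple_iff (hsym : ∀ i j, col i j = col j i) {a b c : V}
    (hab : a ≠ b) (hac : a ≠ c) (hbc : b ≠ c) :
    IsMonochromatic col {a, b, c} ↔ col a b = col a c ∧ col a b = col b c := by
  simp only [IsMonochromatic, mem_insert, mem_singleton, forall_eq_or_imp, forall_eq]
  rw [hsym b a, hsym c a, hsym c b]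
  cases col a b <;> cases col a c <;> cases col b c <;>
    simp [hab, hac, hbc, hab.symm, hac.symm, hbc.symm]

lemma isBichromaticCorner_triple_iff {a b c : V} (hab : a ≠ b) (hac : a ≠ c) :
    IsBichromaticCorner col {a, b, c} a ↔ col a b ≠ col a c := by
  have herase : ({a, b, c} : Finset V).erase a = {b, c} :=
    erase_insert (by simp [hab, hac])
  simp only [IsBichromaticCorner, herase, mem_insert, mem_singleton, exists_eq_or_imp,
    exists_eq_left, ne_eq, not_true_eq_false, false_or, or_false, true_or, true_and]
  exact ⟨fun h => h.elim id fun hne heq => hne heq.symm, Or.inl⟩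

lemma card_filter_isBichromaticCorner [Fintype V] (hsym : ∀ i j, col i j = col j i)
    {s : Finset V} (hs : #s = 3) :
    #(univ.filter (IsBichromaticCorner col s)) = if IsMonochromatic col s then 0 else 2 := by
  have hfilter :
      univ.filter (IsBichromaticCorner col s) = s.filter (IsBichromaticCorner col s) := by
    ext v; simpa using fun h => h.1
  rw [hfilter]
  obtain ⟨a, b, c, hab, hac, hbc, rfl⟩ := card_eq_three.mp hs
  have ha := isBichromaticCorner_triple_iff col hab hac
  have hb : IsBichromaticCorner col {a, b, c} b ↔ col b a ≠ col b c := by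
    rw [insert_comm]; exact isBichromaticCorner_triple_iff col hab.symm hbc
  have hc : IsBichromaticCorner col {a, b, c} c ↔ col c a ≠ col c b := by
    rw [show ({a, b, c} : Finset V) = {c, a, b} by
      ext; simp only [mem_insert, mem_singleton]; tauto]
    exact isBichromaticCorner_triple_iff col hac.symm hbc.symm
  rw [card_filter, sum_insert (by simp [hab, hac]), sum_insert (by simp [hbc]), sum_singleton]
  simp only [ha, hb, hc, isMonochromatic_triple_iff col hsym hab hac hbc, hsym b a, hsym c a,
    hsym c b]
  cases col a b <;> cases col a c <;> cases col b c <;> decide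

lemma card_filter_isBichromaticCorner_le [Fintype V] (v : V) :
    #((univ.powersetCard 3).filter (IsBichromaticCorner col · v)) ≤
      #(colorNeighbors col v true) * #(colorNeighbors col v false) := by
  refine (card_le_card ?_).trans (card_image_le (s := colorNeighbors col v true ×ˢ
    colorNeighbors col v false) (f := fun p => {v, p.1, p.2}) |>.trans (card_product _ _).le)
  intro s hs
  rw [mem_filter, mem_powersetCard] at hs
  obtain ⟨⟨-, hcard⟩, hv, i, hi, j, hj, hij⟩ := hs
  obtain ⟨r, hr, b, hb, hrc, hbc⟩ :
      ∃ r ∈ s.erase v, ∃ b ∈ s.erase v, col v r = true ∧ col v b = false := by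
    cases hci : col v i <;> cases hcj : col v j <;> simp only [hci, hcj] at hij
    exacts [absurd rfl hij, ⟨j, hj, i, hi, hcj, hci⟩, ⟨i, hi, j, hj, hci, hcj⟩, absurd rfl hij]
  have hrb : r ≠ b := by rintro rfl; simp [hrc] at hbc
  rw [mem_erase] at hr hb
  refine mem_image.mpr ⟨(r, b), by simp [colorNeighbors, hr.1, hb.1, hrc, hbc], ?_⟩
  refine eq_of_subset_of_card_le (by simp [insert_subset_iff, hv, hr.2, hb.2]) ?_
  rw [hcard, card_eq_three.mpr ⟨v, r, b, hr.1.symm, hb.1.symm, hrb, rfl⟩]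

lemma card_colorNeighbors_add_card_colorNeighbors [Fintype V] (v : V) :
    #(colorNeighbors col v true) + #(colorNeighbors col v false) = Fintype.card V - 1 := by
  rw [← card_univ, ← card_erase_of_mem (mem_univ v),
    ← card_filter_add_card_filter_not (s := univ.erase v) (col v · = true)]
  simp only [colorNeighbors, Bool.not_eq_true]

theorem two_mul_card_filter_not_isMonochromatic_le [Fintype V]
    (hsym : ∀ i j, col i j = col j i) {k : ℕ} (hV : Fintype.card V = 2 * k + 1) :
    2 * #((univ.powersetCard 3).filter (¬ IsMonochromatic col ·)) ≤ (2 * k + 1) * k ^ 2 := by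
  set T : Finset (Finset V) := univ.powersetCard 3
  have hdeg (v : V) : #(colorNeighbors col v true) * #(colorNeighbors col v false) ≤ k ^ 2 := by
    have hsum : (#(colorNeighbors col v true) + #(colorNeighbors col v false) : ℤ) = 2 * k := by
      rw [← Nat.cast_add, card_colorNeighbors_add_card_colorNeighbors, hV]; push_cast; ring
    zify
    nlinarith [sq_nonneg ((#(colorNeighbors col v true) : ℤ) - #(colorNeighbors col v false))]
  calc 2 * #(T.filter (¬ IsMonochromatic col ·))
      = ∑ s ∈ T, #(univ.filter (IsBichromaticCorner col s)) := by
        rw [card_filter, mul_sum]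
        refine sum_congr rfl fun s hs => ?_
        rw [card_filter_isBichromaticCorner col hsym (mem_powersetCard.mp hs).2]
        split_ifs <;> rfl
    _ = ∑ v, #(T.filter (IsBichromaticCorner col · v)) :=
        sum_card_bipartiteAbove_eq_sum_card_bipartiteBelow _
    _ ≤ ∑ _v : V, k ^ 2 :=
        sum_le_sum fun v _ => (card_filter_isBichromaticCorner_le col v).trans (hdeg v)
    _ = (2 * k + 1) * k ^ 2 := by rw [sum_const, card_univ, hV, smul_eq_mul]

end Goodman

lemma Nat.six_mul_choose_three (n : ℕ) : 6 * (n + 1).choose 3 = (n + 1) * n * (n - 1) := by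
  rw [show 6 = Nat.factorial 3 from rfl, ← Nat.descFactorial_eq_factorial_mul_choose,
    Nat.descFactorial_succ, Nat.descFactorial_succ, Nat.descFactorial_one,
    Nat.add_sub_cancel, show n + 1 - 2 = n - 1 by omega]
  ring

open Goodman

/-- Goodman, case `N = 4m+1`: every 2-coloring of the edges of
`K_{4m+1}` has at least `2m(m-1)(4m+1)/3` monochromatic triangles. -/
theorem goodman_4m_add_one (m : ℕ)
    (col : Fin (4 * m + 1) → Fin (4 * m + 1) → Bool)
    (hsym : ∀ i j, col i j = col j i) :
    2 * m * (m - 1) * (4 * m + 1) / 3 ≤ (monoTriangles col).card := by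
  have hmono : monoTriangles col = (univ.powersetCard 3).filter (IsMonochromatic col) := by
    ext; simp [monoTriangles, IsMonochromatic]
  have hnon := two_mul_card_filter_not_isMonochromatic_le col hsym (k := 2 * m)
    (by rw [Fintype.card_fin]; ring)
  have hsplit := card_filter_add_card_filter_not (s := univ.powersetCard 3) (IsMonochromatic col)
  rw [card_powersetCard, card_univ, Fintype.card_fin] at hsplit
  have hchoose := Nat.six_mul_choose_three (4 * m)
  rw [hmono]
  apply Nat.div_le_of_le_mul
  obtain _ | m := m
  · simp
  · rw [show 4 * (m + 1) - 1 = 4 * m + 3 by omega] at hchoose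
    rw [Nat.add_sub_cancel]
    nlinarith
end

section
/- For every 2-coloring of the edges of the complete graph on N = 4m+3 vertices, the number of monochromatic triangles is at least 2m(m+1)(4m-1)/3. -/
open Finset

section Aux
variable {α : Type*} [DecidableEq α]

/-- In a non-monochromatic triangle there are two "bad" vertices. -/
lemma two_bad (col : α → α → Bool) (hsym : ∀ i j, col i j = col j i) (a b c : α)
    (hab : a ≠ b) (hac : a ≠ c) (hbc : b ≠ c)
    (h : ¬ ((∀ i ∈ ({a,b,c} : Finset α), ∀ j ∈ ({a,b,c} : Finset α), i ≠ j → col i j = true) ∨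
            (∀ i ∈ ({a,b,c} : Finset α), ∀ j ∈ ({a,b,c} : Finset α), i ≠ j → col i j = false))) :
    ∃ x y z : α, ({x,y,z} : Finset α) = {a,b,c} ∧ x ≠ y ∧ x ≠ z ∧ y ≠ z ∧
      col x y ≠ col x z ∧ col y x ≠ col y z := by
  have eabc : ({b,c,a} : Finset α) = {a,b,c} := by ext x; simp; tauto
  have eacb : ({a,c,b} : Finset α) = {a,b,c} := by ext x; simp; tauto
  rcases hab' : col a b <;> rcases hac' : col a c <;> rcases hbc' : col b c
  · -- f f f : mono
    exact absurd (Or.inr (by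
      intro i hi j hj hij
      simp only [mem_insert, mem_singleton] at hi hj
      rcases hi with rfl|rfl|rfl <;> rcases hj with rfl|rfl|rfl <;>
        first
        | exact absurd rfl hij
        | assumption
        | (rw [hsym]; assumption))) h
  · -- ab f, ac f, bc t : bad b c
    exact ⟨b, c, a, eabc, hbc, hab.symm, hac.symm, by
      rw [hbc', hsym b a, hab']; simp, by rw [hsym c b, hbc', hsym c a, hac']; simp⟩
  · -- ab f, ac t, bc f : bad a c
    exact ⟨a, c, b, eacb, hac, hab, hbc.symm, by rw [hac', hab']; simp, by
      rw [hsym c a, hac', hsym c b, hbc']; simp⟩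
  · -- ab f, ac t, bc t : bad a b
    exact ⟨a, b, c, rfl, hab, hac, hbc, by rw [hab', hac']; simp, by
      rw [hsym b a, hab', hbc']; simp⟩
  · -- ab t, ac f, bc f : bad a b
    exact ⟨a, b, c, rfl, hab, hac, hbc, by rw [hab', hac']; simp, by
      rw [hsym b a, hab', hbc']; simp⟩
  · -- ab t, ac f, bc t : bad a c
    exact ⟨a, c, b, eacb, hac, hab, hbc.symm, by rw [hac', hab']; simp, by
      rw [hsym c a, hac', hsym c b, hbc']; simp⟩
  · -- ab t, ac t, bc f : bad b c
    exact ⟨b, c, a, eabc, hbc, hab.symm, hac.symm, by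
      rw [hbc', hsym b a, hab']; simp, by rw [hsym c b, hbc', hsym c a, hac']; simp⟩
  · -- t t t : mono
    exact absurd (Or.inl (by
      intro i hi j hj hij
      simp only [mem_insert, mem_singleton] at hi hj
      rcases hi with rfl|rfl|rfl <;> rcases hj with rfl|rfl|rfl <;>
        first
        | exact absurd rfl hij
        | assumption
        | (rw [hsym]; assumption))) h

end Aux

set_option maxHeartbeats 2000000 in
open Finset in
/-- Goodman, case `N = 4m+3`: every 2-coloring of the edges of
`K_{4m+3}` has at least `2m(m+1)(4m-1)/3` monochromatic triangles. -/
theorem goodman_4m_add_three (m : ℕ)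
    (col : Fin (4 * m + 3) → Fin (4 * m + 3) → Bool)
    (hsym : ∀ i j, col i j = col j i) :
    2 * m * (m + 1) * (4 * m - 1) / 3 ≤ (monoTriangles col).card := by
  set R : Fin (4 * m + 3) → Finset (Fin (4 * m + 3)) :=
    fun v => univ.filter (fun j => j ≠ v ∧ col v j = true) with hRdef
  set B : Fin (4 * m + 3) → Finset (Fin (4 * m + 3)) :=
    fun v => univ.filter (fun j => j ≠ v ∧ col v j = false) with hBdef
  have hdisjRB : ∀ v, Disjoint (R v) (B v) := by
    intro v
    rw [Finset.disjoint_left]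
    intro j hj1 hj2
    rw [hRdef] at hj1; rw [hBdef] at hj2
    simp only [mem_filter] at hj1 hj2
    rw [hj1.2.2] at hj2
    exact absurd hj2.2.2 (by simp)
  have hRB : ∀ v, (R v).card + (B v).card = 4 * m + 2 := by
    intro v
    have hunion : R v ∪ B v = univ.erase v := by
      ext j
      rw [hRdef, hBdef]
      simp only [mem_union, mem_filter, mem_univ, true_and, mem_erase, and_true]
      rcases h : col v j <;> simp [h]
    rw [← Finset.card_union_of_disjoint (hdisjRB v), hunion,
      Finset.card_erase_of_mem (mem_univ v), card_univ, Fintype.card_fin]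
    omega
  -- the set of bichromatic "angles" (ordered)
  set A : Finset (Fin (4 * m + 3) × Fin (4 * m + 3) × Fin (4 * m + 3)) :=
    univ.filter (fun p => p.1 ≠ p.2.1 ∧ p.1 ≠ p.2.2 ∧ col p.1 p.2.1 ≠ col p.1 p.2.2) with hAdef
  -- Step 1 : |A| = ∑ v, 2 * |R v| * |B v|
  have step1 : A.card = ∑ v : Fin (4 * m + 3), 2 * ((R v).card * (B v).card) := by
    rw [Finset.card_eq_sum_card_fiberwise (f := Prod.fst) (t := univ)
      (fun p _ => mem_univ _)]
    refine Finset.sum_congr rfl (fun v _ => ?_)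
    have hfib : A.filter (fun p => p.1 = v) =
        ((R v ×ˢ B v) ∪ (B v ×ˢ R v)).image (fun q => (v, q.1, q.2)) := by
      ext ⟨w, y, z⟩
      rw [hAdef, hRdef, hBdef]
      simp only [mem_filter, mem_univ, true_and, mem_image, mem_union, mem_product,
        Prod.mk.injEq, Prod.exists]
      constructor
      · rintro ⟨⟨h1, h2, h3⟩, heq⟩
        refine ⟨y, z, ?_, heq.symm, rfl, rfl⟩
        rw [← heq]
        rcases hy : col w y <;> rcases hz : col w z <;> rw [hy, hz] at h3 <;>
          simp_all [Ne.symm h1, Ne.symm h2] <;>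
          exact ⟨fun hh => h1 hh.symm, fun hh => h2 hh.symm⟩
      · rintro ⟨y', z', hmem, heq1, heq2, heq3⟩
        subst heq2; subst heq3
        rcases hmem with ⟨⟨hy1, hy2⟩, hz1, hz2⟩ | ⟨⟨hy1, hy2⟩, hz1, hz2⟩ <;>
          rw [← heq1] <;>
          exact ⟨⟨Ne.symm hy1, Ne.symm hz1, by rw [hy2, hz2]; simp⟩, rfl⟩
    rw [hfib, Finset.card_image_of_injective _
        (by intro q1 q2 h; simpa [Prod.ext_iff] using h)]
    have hdisjP : Disjoint ((R v) ×ˢ (B v)) ((B v) ×ˢ (R v)) := by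
      rw [Finset.disjoint_left]
      rintro ⟨y, z⟩ h1 h2
      rw [Finset.mem_product] at h1 h2
      exact Finset.disjoint_left.mp (hdisjRB v) h1.1 h2.1
    rw [Finset.card_union_of_disjoint hdisjP, Finset.card_product, Finset.card_product]
    ring
  -- the set of non-monochromatic triangles
  set NM : Finset (Finset (Fin (4 * m + 3))) := (Finset.univ.powersetCard 3).filter
      (fun s => ¬((∀ i ∈ s, ∀ j ∈ s, i ≠ j → col i j = true) ∨
                  (∀ i ∈ s, ∀ j ∈ s, i ≠ j → col i j = false))) with hNMdef
  have hmono_eq : monoTriangles col = (Finset.univ.powersetCard 3).filter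
      (fun s => (∀ i ∈ s, ∀ j ∈ s, i ≠ j → col i j = true) ∨
                (∀ i ∈ s, ∀ j ∈ s, i ≠ j → col i j = false)) := rfl
  have hsplit : (monoTriangles col).card + NM.card = (4 * m + 3).choose 3 := by
    rw [hmono_eq, hNMdef, Finset.card_filter_add_card_filter_not,
      Finset.card_powersetCard, card_univ, Fintype.card_fin]
  -- Step 2 : 4 * |NM| ≤ |A|
  have hmapsto : ∀ p ∈ A, ({p.1, p.2.1, p.2.2} : Finset (Fin (4 * m + 3))) ∈ NM := by
    rintro ⟨x, y, z⟩ hp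
    rw [hAdef] at hp
    simp only [mem_filter, mem_univ, true_and] at hp
    obtain ⟨h1, h2, h3⟩ := hp
    have hyz : y ≠ z := by rintro rfl; exact h3 rfl
    rw [hNMdef]
    simp only [mem_filter, Finset.mem_powersetCard]
    refine ⟨⟨Finset.subset_univ _, Finset.card_eq_three.mpr ⟨x, y, z, h1, h2, hyz, rfl⟩⟩, ?_⟩
    rintro (hall | hall) <;>
      exact h3 (by rw [hall x (by simp) y (by simp) h1, hall x (by simp) z (by simp) h2])
  have step2 : 4 * NM.card ≤ A.card := by
    rw [Finset.card_eq_sum_card_fiberwise hmapsto]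
    have hfiber : ∀ T ∈ NM, 4 ≤ (A.filter
        (fun p => ({p.1, p.2.1, p.2.2} : Finset (Fin (4 * m + 3))) = T)).card := by
      intro T hT
      rw [hNMdef] at hT
      simp only [mem_filter, Finset.mem_powersetCard] at hT
      obtain ⟨⟨-, hcard⟩, hnm⟩ := hT
      obtain ⟨a, b, c, hab, hac, hbc, rfl⟩ := Finset.card_eq_three.mp hcard
      obtain ⟨x, y, z, hxyz, hxy, hxz, hyz, hc1, hc2⟩ := two_bad col hsym a b c hab hac hbc hnm
      have e1 : ({x, z, y} : Finset (Fin (4 * m + 3))) = {x, y, z} := by ext w; simp; tauto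
      have e2 : ({y, x, z} : Finset (Fin (4 * m + 3))) = {x, y, z} := by ext w; simp; tauto
      have e3 : ({y, z, x} : Finset (Fin (4 * m + 3))) = {x, y, z} := by ext w; simp; tauto
      have hsubF : ({(x, y, z), (x, z, y), (y, x, z), (y, z, x)} :
          Finset (Fin (4 * m + 3) × Fin (4 * m + 3) × Fin (4 * m + 3))) ⊆
          A.filter (fun p => ({p.1, p.2.1, p.2.2} : Finset (Fin (4 * m + 3))) = {a, b, c}) := by
        intro p hp
        simp only [mem_insert, mem_singleton] at hp
        rcases hp with rfl | rfl | rfl | rfl <;> rw [mem_filter, hAdef, mem_filter]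
        · exact ⟨⟨mem_univ _, hxy, hxz, hc1⟩, hxyz⟩
        · exact ⟨⟨mem_univ _, hxz, hxy, Ne.symm hc1⟩, e1.trans hxyz⟩
        · exact ⟨⟨mem_univ _, Ne.symm hxy, hyz, hc2⟩, e2.trans hxyz⟩
        · exact ⟨⟨mem_univ _, hyz, Ne.symm hxy, Ne.symm hc2⟩, e3.trans hxyz⟩
      have hcard4 : ({(x, y, z), (x, z, y), (y, x, z), (y, z, x)} :
          Finset (Fin (4 * m + 3) × Fin (4 * m + 3) × Fin (4 * m + 3))).card = 4 := by
        rw [Finset.card_insert_of_notMem (by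
            simp [Prod.ext_iff, hxy, hxz, hyz, Ne.symm hxy, Ne.symm hxz, Ne.symm hyz]),
          Finset.card_insert_of_notMem (by
            simp [Prod.ext_iff, hxy, hxz, hyz, Ne.symm hxy, Ne.symm hxz, Ne.symm hyz]),
          Finset.card_insert_of_notMem (by
            simp [Prod.ext_iff, hxy, hxz, hyz, Ne.symm hxy, Ne.symm hxz, Ne.symm hyz]),
          Finset.card_singleton]
      calc (4 : ℕ) = ({(x, y, z), (x, z, y), (y, x, z), (y, z, x)} :
            Finset (Fin (4 * m + 3) × Fin (4 * m + 3) × Fin (4 * m + 3))).card := hcard4.symm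
        _ ≤ _ := Finset.card_le_card hsubF
    calc 4 * NM.card = ∑ _T ∈ NM, 4 := by rw [Finset.sum_const, smul_eq_mul, mul_comm]
      _ ≤ _ := Finset.sum_le_sum hfiber
  -- Step 3 : bound the vertex sum
  have step3 : A.card ≤ (4 * m + 3) * (2 * (2 * m + 1) ^ 2) := by
    rw [step1]
    calc ∑ v : Fin (4 * m + 3), 2 * ((R v).card * (B v).card)
        ≤ ∑ _v : Fin (4 * m + 3), 2 * (2 * m + 1) ^ 2 := by
          apply Finset.sum_le_sum
          intro v _
          have h := hRB v
          have h' : ((R v).card : ℤ) + (B v).card = 4 * m + 2 := by exact_mod_cast h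
          have h2 : ((R v).card : ℤ) * (B v).card ≤ (2 * m + 1) ^ 2 := by
            nlinarith [sq_nonneg (((R v).card : ℤ) - (B v).card)]
          have h3 : (R v).card * (B v).card ≤ (2 * m + 1) ^ 2 := by exact_mod_cast h2
          omega
      _ = (4 * m + 3) * (2 * (2 * m + 1) ^ 2) := by
          rw [Finset.sum_const, card_univ, Fintype.card_fin, smul_eq_mul]
  -- NM.card ≤ 8m³ + 14m² + 8m + 1 (parity mod 4)
  have hNMbound : NM.card ≤ 8 * m ^ 3 + 14 * m ^ 2 + 8 * m + 1 := by
    have h := step2.trans step3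
    have hSval : (4 * m + 3) * (2 * (2 * m + 1) ^ 2)
        = 4 * (8 * m ^ 3 + 14 * m ^ 2 + 8 * m + 1) + 2 := by ring
    rw [hSval] at h
    obtain ⟨Q, hQ⟩ : ∃ Q, 8 * m ^ 3 + 14 * m ^ 2 + 8 * m + 1 = Q := ⟨_, rfl⟩
    rw [hQ] at h ⊢
    omega
  -- value of the binomial coefficient
  have h6C : 6 * (4 * m + 3).choose 3 = (4 * m + 3) * (4 * m + 2) * (4 * m + 1) := by
    have e1 : (4 * m + 3) - 1 = 4 * m + 2 := by omega
    have e2 : (4 * m + 3) - 2 = 4 * m + 1 := by omega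
    rw [Nat.choose_eq_descFactorial_div_factorial,
      show (6 : ℕ) = Nat.factorial 3 from rfl,
      Nat.mul_div_cancel' (Nat.factorial_dvd_descFactorial _ 3)]
    show (4 * m + 3).descFactorial (2 + 1) = _
    rw [Nat.descFactorial_succ]
    show _ * (4 * m + 3).descFactorial (1 + 1) = _
    rw [Nat.descFactorial_succ, Nat.descFactorial_one, e1, e2]
    ring
  -- final arithmetic
  have key : 2 * m * (m + 1) * (4 * m - 1) ≤ 3 * (monoTriangles col).card := by
    have h6 : 6 * (monoTriangles col).card + 6 * NM.card =
        (4 * m + 3) * (4 * m + 2) * (4 * m + 1) := by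
      rw [← h6C]; omega
    rcases m with _ | k
    · simp
    · have e : 4 * (k + 1) - 1 = 4 * k + 3 := by omega
      rw [e]
      nlinarith [h6, hNMbound]
  calc 2 * m * (m + 1) * (4 * m - 1) / 3 ≤ 3 * (monoTriangles col).card / 3 :=
        Nat.div_le_div_right key
    _ = (monoTriangles col).card := by omega
end

section
/- For every 2-coloring of the edges of K_N (N ≥ 3), the number of monochromatic triangles is at least C(N,3) − floor((N/2) · floor((N−1)²/4)). -/
/-!
Call a triple `⟨v, i, j⟩` a bichromatic angle if `vi` is red and `vj` is blue. A vertex with `r`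
red and `b` blue edges is the apex of `r * b ≤ ⌊(N - 1)² / 4⌋` angles, since `r + b = N - 1`.
A non-monochromatic triangle has one edge whose colour differs from the other two, and it
carries exactly two angles, at the endpoints of that edge; a monochromatic triangle carries
none. Hence twice the number of non-monochromatic triangles is at most `N ⌊(N - 1)² / 4⌋`.
-/

open Finset

lemma mul_le_sq_add_div_four (a b : ℕ) : a * b ≤ (a + b) ^ 2 / 4 :=
  (Nat.le_div_iff_mul_le four_pos).2 (by linarith [four_mul_le_sq_add a b])

section
variable {V : Type*} [DecidableEq V] (col : V → V → Bool)

def IsMonochromatic (s : Finset V) : Prop :=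
  (∀ i ∈ s, ∀ j ∈ s, i ≠ j → col i j = true) ∨ (∀ i ∈ s, ∀ j ∈ s, i ≠ j → col i j = false)

instance : DecidablePred (IsMonochromatic col) := fun _ => inferInstanceAs (Decidable (_ ∨ _))

def redNbrs (s : Finset V) (v : V) : Finset V := (s.erase v).filter (col v · = true)

def blueNbrs (s : Finset V) (v : V) : Finset V := (s.erase v).filter (col v · = false)

def bichromaticAngles (s : Finset V) : Finset (Σ _ : V, V × V) :=
  s.sigma fun v => redNbrs col s v ×ˢ blueNbrs col s v

lemma card_bichromaticAngles (s : Finset V) :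
    #(bichromaticAngles col s) = ∑ v ∈ s, #(redNbrs col s v) * #(blueNbrs col s v) := by
  simp only [bichromaticAngles, card_sigma, card_product]

lemma card_redNbrs_add_card_blueNbrs {s : Finset V} {v : V} (hv : v ∈ s) :
    #(redNbrs col s v) + #(blueNbrs col s v) = #s - 1 := by
  rw [← card_erase_of_mem hv,
    ← card_filter_add_card_filter_not (s := s.erase v) (p := (col v · = true))]
  simp only [redNbrs, blueNbrs, Bool.not_eq_true]

lemma card_bichromaticAngles_le (s : Finset V) :
    #(bichromaticAngles col s) ≤ #s * ((#s - 1) ^ 2 / 4) := by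
  rw [card_bichromaticAngles, ← smul_eq_mul, ← sum_const]
  refine sum_le_sum fun v hv => ?_
  rw [← card_redNbrs_add_card_blueNbrs col hv]
  exact mul_le_sq_add_div_four _ _

lemma mem_bichromaticAngles {s : Finset V} {v i j : V} :
    ⟨v, i, j⟩ ∈ bichromaticAngles col s ↔
      v ∈ s ∧ i ∈ s ∧ j ∈ s ∧ i ≠ v ∧ j ≠ v ∧ col v i = true ∧ col v j = false := by
  simp only [bichromaticAngles, redNbrs, blueNbrs, mem_sigma, mem_product, mem_filter, mem_erase]
  tauto

lemma card_bichromaticAngles_of_not_isMonochromatic (hsym : ∀ i j, col i j = col j i)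
    {s : Finset V} (hs : #s = 3) (hmono : ¬IsMonochromatic col s) :
    #(bichromaticAngles col s) = 2 := by
  obtain ⟨a, b, c, hab, hac, hbc, rfl⟩ := card_eq_three.mp hs
  simp only [IsMonochromatic, mem_insert, mem_singleton] at hmono
  rw [card_bichromaticAngles]
  rcases hx : col a b <;> rcases hy : col a c <;> rcases hz : col b c <;>
    simp_all [sum_insert, redNbrs, blueNbrs, filter_insert, filter_singleton, erase_insert_of_ne,
      erase_insert_eq_erase, hab.symm, hac.symm, hbc.symm]

lemma card_triple_eq_three_of_mem_bichromaticAngles {s : Finset V} {v i j : V}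
    (h : ⟨v, i, j⟩ ∈ bichromaticAngles col s) : #({v, i, j} : Finset V) = 3 := by
  obtain ⟨-, -, -, hiv, hjv, hi, hj⟩ := (mem_bichromaticAngles col).1 h
  have hij : i ≠ j := by rintro rfl; simp_all
  exact card_eq_three.2 ⟨v, i, j, hiv.symm, hjv.symm, hij, rfl⟩

lemma filter_bichromaticAngles_univ [Fintype V] {s : Finset V} (hs : #s = 3) :
    (bichromaticAngles col univ).filter (fun t => {t.1, t.2.1, t.2.2} = s) =
      bichromaticAngles col s := by
  ext ⟨v, i, j⟩
  simp only [mem_filter, mem_bichromaticAngles, mem_univ, true_and]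
  constructor
  · rintro ⟨h, rfl⟩
    simp_all
  · intro h
    refine ⟨by tauto, (eq_of_subset_of_card_le (by simp [insert_subset_iff, *]) ?_)⟩
    rw [hs, card_triple_eq_three_of_mem_bichromaticAngles col ((mem_bichromaticAngles col).2 h)]

lemma two_mul_card_not_isMonochromatic_le [Fintype V] (hsym : ∀ i j, col i j = col j i) :
    2 * #((univ.powersetCard 3).filter (¬IsMonochromatic col ·)) ≤
      #(bichromaticAngles col univ) := by
  have hmaps : ∀ t ∈ bichromaticAngles col univ,
      ({t.1, t.2.1, t.2.2} : Finset V) ∈ univ.powersetCard 3 := fun ⟨v, i, j⟩ h =>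
    mem_powersetCard_univ.2 (card_triple_eq_three_of_mem_bichromaticAngles col h)
  rw [card_eq_sum_card_fiberwise hmaps, mul_comm, ← smul_eq_mul, ← sum_const]
  calc ∑ _ ∈ (univ.powersetCard 3).filter (¬IsMonochromatic col ·), 2
      = ∑ s ∈ (univ.powersetCard 3).filter (¬IsMonochromatic col ·),
          #(bichromaticAngles col s) := by
        refine sum_congr rfl fun s hs => ?_
        rw [mem_filter, mem_powersetCard_univ] at hs
        exact (card_bichromaticAngles_of_not_isMonochromatic col hsym hs.1 hs.2).symm
    _ ≤ ∑ s ∈ univ.powersetCard 3, #(bichromaticAngles col s) :=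
        sum_le_sum_of_subset (filter_subset _ _)
    _ = _ := by
        refine sum_congr rfl fun s hs => ?_
        rw [filter_bichromaticAngles_univ col (mem_powersetCard_univ.1 hs)]

end

lemma monoTriangles_eq_filter {N : ℕ} (col : Fin N → Fin N → Bool) :
    monoTriangles col = (univ.powersetCard 3).filter (IsMonochromatic col) := by
  ext; simp [monoTriangles, IsMonochromatic]

theorem goodman_schwenk_general (N : ℕ)
    (col : Fin N → Fin N → Bool)
    (hsym : ∀ i j, col i j = col j i) :
    N.choose 3 - N * ((N - 1) ^ 2 / 4) / 2 ≤ (monoTriangles col).card := by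
  have hsplit : #(monoTriangles col) + #((univ.powersetCard 3).filter (¬IsMonochromatic col ·)) =
      N.choose 3 := by
    rw [monoTriangles_eq_filter, card_filter_add_card_filter_not, card_powersetCard, card_univ,
      Fintype.card_fin]
  have hangles := two_mul_card_not_isMonochromatic_le col hsym
  have hbound := card_bichromaticAngles_le col univ
  rw [card_univ, Fintype.card_fin] at hbound
  omega

/-- Schwenk's form of Goodman's formula: every 2-coloring of the
edges of `K_N`, `N ≥ 3`, has at least `C(N,3) − ⌊(N/2)·⌊(N−1)²/4⌋⌋`
monochromatic triangles.  (Here `⌊(N/2)·⌊(N−1)²/4⌋⌋ = N * ((N-1)^2 / 4) / 2`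
using natural-number division.) -/
theorem goodman_schwenk (N : ℕ) (hN : 3 ≤ N)
    (col : Fin N → Fin N → Bool)
    (hsym : ∀ i j, col i j = col j i) :
    N.choose 3 - N * ((N - 1) ^ 2 / 4) / 2 ≤ (monoTriangles col).card :=
  goodman_schwenk_general N col hsym
end
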